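/- arXiv:1306.6588 — 4 statements merged into one kernel-verified Lean document; each statement's English description precedes it below -/
import Mathlib

section
/- Let 𝒳 and 𝒴 be metrizable topological vector spaces, and let Φ : D_Φ ⊆ 𝒳 → 𝒴 be Hadamard differentiable at θ ∈ D_Φ tangentially to a set D₀ ⊆ 𝒳, with derivative Φ'_θ : D₀ → 𝒴. Let X_n : Ω_n → D_Φ, n ≥ 1, be a sequence of maps on probability spaces (Ω_n, 𝓕_n, P_n), and let {r_n} be positive reals with r_n → ∞. If {r_n(X_n − θ)} satisfies the large deviation principle in 𝒳 with speed c_n^{-1} and rate function I such that {x : I(x) < ∞} ⊆ D₀, then {r_n(Φ(X_n) − Φ(θ))} satisfies the large deviation principle in 𝒴 with speed c_n^{-1} and rate function I_{Φ'_θ}(y) = inf{ I(x) : Φ'_θ(x) = y }. -/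
open MeasureTheory ProbabilityTheory Filter Set
open scoped Topology UniformConvergence ENNReal NNReal

noncomputable section

/-- Integral of a bounded measurable real function against a finite signed measure,
defined via the Jordan decomposition. -/
def smInt {E : Type*} [MeasurableSpace E] (η : SignedMeasure E) (f : E → ℝ) : ℝ :=
  (∫ x, f x ∂η.toJordanDecomposition.posPart) - ∫ x, f x ∂η.toJordanDecomposition.negPart

/-- `η ∈ M_b^{ν,0}`: a finite signed measure which is absolutely continuous with respect
to `ν` and has total mass zero. -/
def MemMb0 {E : Type*} [MeasurableSpace E] (ν : Measure E) (η : SignedMeasure E) : Prop :=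
  η ≪ᵥ ν.toENNRealVectorMeasure ∧ η Set.univ = 0

/-- The moderate deviation rate functional `I_ν(η) = (1/2)∫ (dη/dν)² dν` for
`η ∈ M_b^{ν,0}`, and `+∞` otherwise. -/
def rateFn {E : Type*} [MeasurableSpace E] (ν : Measure E) (η : SignedMeasure E) : ℝ≥0∞ :=
  letI := Classical.propDecidable (MemMb0 ν η)
  if MemMb0 ν η then 2⁻¹ * ∫⁻ x, ENNReal.ofReal ((η.rnDeriv ν x) ^ 2) ∂ν else ⊤

/-- A sequence of (possibly non-measurable) maps `Y n : Ω n → X` on probability spaces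
satisfies the large deviation principle with speed `(c n)⁻¹` and rate function `I`:
`I` is lower semicontinuous with compact level sets and for every set `A`,
`-inf_{interior A} I ≤ liminf (c n)⁻¹ log P_{n*}(Y n ∈ A)` and
`limsup (c n)⁻¹ log P_n^*(Y n ∈ A) ≤ -inf_{closure A} I`, where outer probability is the
outer measure of the set and inner probability of `B` is `1 - P(Bᶜ)` (outer). -/
def SatisfiesLDP {X : Type*} [TopologicalSpace X] {Ω : ℕ → Type*}
    [∀ n, MeasurableSpace (Ω n)] (P : ∀ n, Measure (Ω n))
    (Y : ∀ n, Ω n → X) (c : ℕ → ℝ) (I : X → ℝ≥0∞) : Prop :=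
  LowerSemicontinuous I ∧
  (∀ r : ℝ≥0∞, r ≠ ⊤ → IsCompact {x | I x ≤ r}) ∧
  ∀ A : Set X,
    (-(⨅ x ∈ interior A, (I x : EReal)) ≤
      Filter.liminf
        (fun n => (((c n)⁻¹ : ℝ) : EReal) * ENNReal.log (1 - P n (((Y n) ⁻¹' A)ᶜ)))
        Filter.atTop) ∧
    (Filter.limsup
        (fun n => (((c n)⁻¹ : ℝ) : EReal) * ENNReal.log (P n ((Y n) ⁻¹' A)))
        Filter.atTop ≤
      -(⨅ x ∈ closure A, (I x : EReal)))

/-- Condition (2.1): there are `A ≥ 1` and `δ ∈ (0,1)` with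
`λ_{nk} ≤ A k^{-(δ - 1/2)} λ_n` for all `n, k ≥ 1`. -/
def Cond21 (lam : ℕ → ℝ) : Prop :=
  ∃ A : ℝ, 1 ≤ A ∧ ∃ d : ℝ, d ∈ Set.Ioo (0 : ℝ) 1 ∧
    ∀ n k : ℕ, 1 ≤ n → 1 ≤ k → lam (n * k) ≤ A * (k : ℝ) ^ (-(d - 1 / 2)) * lam n

/-- The scaling sequence: `λ_n` increasing to `∞` with `λ_n = o(√n)`; `b_n = √n / λ_n`. -/
structure ModerateScale (lam : ℕ → ℝ) : Prop where
  pos : ∀ n, 0 < lam n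
  mono : StrictMono lam
  tendsto : Filter.Tendsto lam Filter.atTop Filter.atTop
  littleO : (fun n => lam n) =o[Filter.atTop] (fun n : ℕ => Real.sqrt n)

/-- Hadamard differentiability of `Φ : D_Φ ⊆ 𝒳 → 𝒴` at `θ` tangentially to `D₀`, with
(continuous) derivative `Φ'` defined on `D₀`. -/
def HadamardDiffAt {𝒳 𝒴 : Type*} [AddCommGroup 𝒳] [Module ℝ 𝒳] [TopologicalSpace 𝒳]
    [AddCommGroup 𝒴] [Module ℝ 𝒴] [TopologicalSpace 𝒴]
    (D : Set 𝒳) (Φ : 𝒳 → 𝒴) (θ : 𝒳) (D₀ : Set 𝒳) (Φ' : 𝒳 → 𝒴) : Prop :=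
  ContinuousOn Φ' D₀ ∧
  ∀ h ∈ D₀, ∀ t : ℕ → ℝ, ∀ hs : ℕ → 𝒳,
    (∀ n, t n ≠ 0) → Filter.Tendsto t Filter.atTop (𝓝 0) →
    Filter.Tendsto hs Filter.atTop (𝓝 h) →
    (∀ n, θ + t n • hs n ∈ D) →
    Filter.Tendsto (fun n => (t n)⁻¹ • (Φ (θ + t n • hs n) - Φ θ))
      Filter.atTop (𝓝 (Φ' h))

/-! Uniformly over compact subsets of `D₀`, Hadamard differentiability says that
`r_n (Φ(θ + z/r_n) − Φ(θ))` is eventually close to `Φ'_θ(h)` whenever `z` is close to `h`.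
The level sets `{I ≤ α}` are compact subsets of `D₀`, so this is what the extended contraction
principle needs: the lower bound is checked near a minimiser of `I` on the fibre `Φ'_θ⁻¹(y)`,
the upper bound by covering `{I ≤ α}` with an open set that the rescaled increments map away
from the closed set. -/

def pushforwardRate {X Y : Type*} (f : X → Y) (I : X → ℝ≥0∞) (y : Y) : ℝ≥0∞ :=
  ⨅ (x : X) (_ : f x = y), I x

lemma pushforwardRate_apply_le {X Y : Type*} {f : X → Y} {I : X → ℝ≥0∞} (x : X) :
    pushforwardRate f I (f x) ≤ I x :=
  iInf₂_le (f := fun x' (_ : f x' = f x) => I x') x rfl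

section PushforwardRate

variable {X Y : Type*} [TopologicalSpace X] [TopologicalSpace Y]
  {f : X → Y} {I : X → ℝ≥0∞}

lemma exists_eq_pushforwardRate [T1Space Y] (hlsc : LowerSemicontinuous I)
    (hcomp : ∀ ρ : ℝ≥0∞, ρ ≠ ⊤ → IsCompact {x | I x ≤ ρ})
    (hf : ContinuousOn f {x | I x < ⊤}) {y : Y} (hy : pushforwardRate f I y ≠ ⊤) :
    ∃ x, f x = y ∧ I x = pushforwardRate f I y := by
  set L := pushforwardRate f I y
  have hL1 : L + 1 ≠ ⊤ := ENNReal.add_ne_top.2 ⟨hy, ENNReal.one_ne_top⟩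
  obtain ⟨x₁, hx₁, hIx₁⟩ : ∃ x, f x = y ∧ I x < L + 1 := by
    simpa only [L, pushforwardRate, iInf_lt_iff, exists_prop] using
      ENNReal.lt_add_right hy one_ne_zero
  set s := {x | I x ≤ L + 1} ∩ f ⁻¹' {y}
  have hs : IsCompact s :=
    (hcomp _ hL1).of_isClosed_subset
      ((hf.mono fun x hx => hx.trans_lt hL1.lt_top).preimage_isClosed_of_isClosed
        (hlsc.isClosed_preimage _) isClosed_singleton)
      inter_subset_left
  obtain ⟨x₀, ⟨hx₀L, hx₀y⟩, hmin⟩ :=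
    (hlsc.lowerSemicontinuousOn s).exists_isMinOn (⟨x₁, hIx₁.le, hx₁⟩ : s.Nonempty) hs
  refine ⟨x₀, hx₀y, le_antisymm (le_iInf₂ fun x hx => ?_) (iInf₂_le x₀ hx₀y)⟩
  by_cases hxL : I x ≤ L + 1
  · exact hmin ⟨hxL, hx⟩
  · exact hx₀L.trans (not_le.1 hxL).le

lemma setOf_pushforwardRate_le [T1Space Y] (hlsc : LowerSemicontinuous I)
    (hcomp : ∀ ρ : ℝ≥0∞, ρ ≠ ⊤ → IsCompact {x | I x ≤ ρ})
    (hf : ContinuousOn f {x | I x < ⊤}) {ρ : ℝ≥0∞} (hρ : ρ ≠ ⊤) :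
    {y | pushforwardRate f I y ≤ ρ} = f '' {x | I x ≤ ρ} := by
  ext y
  constructor
  · intro hy
    obtain ⟨x, rfl, hx⟩ :=
      exists_eq_pushforwardRate hlsc hcomp hf (ne_top_of_le_ne_top hρ hy)
    exact ⟨x, hx.trans_le hy, rfl⟩
  · rintro ⟨x, hx, rfl⟩
    exact (pushforwardRate_apply_le x).trans hx

lemma isCompact_setOf_pushforwardRate_le [T1Space Y] (hlsc : LowerSemicontinuous I)
    (hcomp : ∀ ρ : ℝ≥0∞, ρ ≠ ⊤ → IsCompact {x | I x ≤ ρ})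
    (hf : ContinuousOn f {x | I x < ⊤}) {ρ : ℝ≥0∞} (hρ : ρ ≠ ⊤) :
    IsCompact {y | pushforwardRate f I y ≤ ρ} := by
  rw [setOf_pushforwardRate_le hlsc hcomp hf hρ]
  exact (hcomp ρ hρ).image_of_continuousOn (hf.mono fun x hx => hx.trans_lt hρ.lt_top)

lemma lowerSemicontinuous_pushforwardRate [T2Space Y] (hlsc : LowerSemicontinuous I)
    (hcomp : ∀ ρ : ℝ≥0∞, ρ ≠ ⊤ → IsCompact {x | I x ≤ ρ})
    (hf : ContinuousOn f {x | I x < ⊤}) :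
    LowerSemicontinuous (pushforwardRate f I) := by
  refine lowerSemicontinuous_iff_isClosed_preimage.2 fun ρ => ?_
  rcases eq_or_ne ρ ⊤ with rfl | hρ
  · simp
  · exact (isCompact_setOf_pushforwardRate_le hlsc hcomp hf hρ).isClosed

end PushforwardRate

lemma EReal.le_neg_of_forall_lt_imp_le_neg {L M : EReal} (hL : L ≤ 0)
    (h : ∀ α : ℝ≥0∞, α ≠ ⊤ → (α : EReal) < M → L ≤ -α) : L ≤ -M := by
  refine EReal.le_neg_of_le_neg (le_of_forall_lt_imp_le_of_dense fun β hβ => ?_)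
  rcases le_or_gt β 0 with hβ0 | hβ0
  · exact hβ0.trans (EReal.le_neg_of_le_neg (by simpa using hL))
  · have hβtop : β ≠ ⊤ := (hβ.trans_le le_top).ne
    rw [← EReal.coe_toENNReal hβ0.le] at hβ ⊢
    exact EReal.le_neg_of_le_neg (h _ (EReal.toENNReal_ne_top_iff.2 hβtop) hβ)

section LargeDeviations

variable {X Y : Type*} [TopologicalSpace X] [TopologicalSpace Y]
  {Ω : ℕ → Type*} [∀ n, MeasurableSpace (Ω n)] {P : ∀ n, Measure (Ω n)}
  {Z : ∀ n, Ω n → X} {W : ∀ n, Ω n → Y} {c : ℕ → ℝ} {f : X → Y} {I : X → ℝ≥0∞}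

lemma eventually_inv_mul_log_le (hc : Tendsto c atTop atTop) {p q : ℕ → ℝ≥0∞}
    (h : ∀ᶠ n in atTop, p n ≤ q n) :
    ∀ᶠ n in atTop, (((c n)⁻¹ : ℝ) : EReal) * ENNReal.log (p n) ≤
      (((c n)⁻¹ : ℝ) : EReal) * ENNReal.log (q n) := by
  filter_upwards [h, hc.eventually_ge_atTop 0] with n hpq hcn
  exact mul_le_mul_of_nonneg_left (ENNReal.log_monotone hpq)
    (EReal.coe_nonneg.2 (inv_nonneg.2 hcn))

lemma limsup_inv_mul_log_nonpos (hc : Tendsto c atTop atTop) {p : ℕ → ℝ≥0∞}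
    (hp : ∀ n, p n ≤ 1) :
    limsup (fun n => (((c n)⁻¹ : ℝ) : EReal) * ENNReal.log (p n)) atTop ≤ 0 := by
  refine limsup_le_of_le (h := ?_)
  filter_upwards [eventually_inv_mul_log_le hc (Eventually.of_forall hp)] with n hn
  simpa using hn

lemma SatisfiesLDP.neg_le_liminf_of_eventually_subset (hZ : SatisfiesLDP P Z c I)
    (hc : Tendsto c atTop atTop) {U : Set X} (hU : IsOpen U) {x : X} (hx : x ∈ U)
    {B : ∀ n, Set (Ω n)} (hB : ∀ᶠ n in atTop, Z n ⁻¹' U ⊆ B n) :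
    -(I x : EReal) ≤
      liminf (fun n => (((c n)⁻¹ : ℝ) : EReal) * ENNReal.log (1 - P n (B n)ᶜ)) atTop :=
  calc -(I x : EReal) ≤ -(⨅ x ∈ interior U, (I x : EReal)) :=
        EReal.neg_le_neg_iff.2 (iInf₂_le x (hU.interior_eq.symm ▸ hx))
    _ ≤ _ := (hZ.2.2 U).1
    _ ≤ _ := liminf_le_liminf (eventually_inv_mul_log_le hc (hB.mono fun _ hn =>
        tsub_le_tsub_left (measure_mono (compl_subset_compl.2 hn)) 1))

lemma SatisfiesLDP.limsup_le_of_eventually_subset (hZ : SatisfiesLDP P Z c I)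
    (hc : Tendsto c atTop atTop) {F : Set X} (hF : IsClosed F) {α : ℝ≥0∞}
    (hα : ∀ x ∈ F, α ≤ I x) {B : ∀ n, Set (Ω n)} (hB : ∀ᶠ n in atTop, B n ⊆ Z n ⁻¹' F) :
    limsup (fun n => (((c n)⁻¹ : ℝ) : EReal) * ENNReal.log (P n (B n))) atTop ≤ -(α : EReal) :=
  calc _ ≤ _ := limsup_le_limsup (eventually_inv_mul_log_le hc (hB.mono fun _ hn =>
        measure_mono hn))
    _ ≤ -(⨅ x ∈ closure F, (I x : EReal)) := (hZ.2.2 F).2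
    _ ≤ -(α : EReal) := EReal.neg_le_neg_iff.2 (le_iInf₂ fun x hx =>
        EReal.coe_ennreal_le_coe_ennreal_iff.2 (hα x (hF.closure_eq ▸ hx)))

/-- The hypothesis of the extended contraction principle, stated without a metric. -/
def EventuallyTracks (Z : ∀ n, Ω n → X) (W : ∀ n, Ω n → Y) (f : X → Y) (S : Set X) : Prop :=
  ∀ K ⊆ S, IsCompact K → ∀ V : Set Y, IsOpen V → MapsTo f K V →
    ∃ U : Set X, IsOpen U ∧ K ⊆ U ∧ ∀ᶠ n in atTop, ∀ ω, Z n ω ∈ U → W n ω ∈ V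

lemma SatisfiesLDP.neg_iInf_pushforwardRate_le_liminf [T1Space Y]
    (hZ : SatisfiesLDP P Z c I) (hc : Tendsto c atTop atTop)
    (hf : ContinuousOn f {x | I x < ⊤}) (hW : EventuallyTracks Z W f {x | I x < ⊤})
    (A : Set Y) :
    -(⨅ y ∈ interior A, (pushforwardRate f I y : EReal)) ≤
      liminf (fun n => (((c n)⁻¹ : ℝ) : EReal) * ENNReal.log (1 - P n (W n ⁻¹' A)ᶜ))
        atTop := by
  rw [EReal.neg_le]
  refine le_iInf₂ fun y hy => EReal.neg_le.1 ?_
  rcases eq_or_ne (pushforwardRate f I y) ⊤ with hy' | hy'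
  · simp [hy']
  obtain ⟨x, rfl, hx⟩ := exists_eq_pushforwardRate hZ.1 hZ.2.1 hf hy'
  have hxI : I x < ⊤ := hx ▸ hy'.lt_top
  obtain ⟨U, hU, hxU, hev⟩ := hW {x} (singleton_subset_iff.2 hxI) isCompact_singleton
    (interior A) isOpen_interior (mapsTo_singleton.2 hy)
  rw [← hx]
  exact hZ.neg_le_liminf_of_eventually_subset hc hU (singleton_subset_iff.1 hxU)
    (hev.mono fun n hn ω hω => interior_subset (s := A) (hn ω hω))

lemma SatisfiesLDP.limsup_le_neg_iInf_pushforwardRate [∀ n, IsProbabilityMeasure (P n)]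
    (hZ : SatisfiesLDP P Z c I) (hc : Tendsto c atTop atTop)
    (hW : EventuallyTracks Z W f {x | I x < ⊤}) (A : Set Y) :
    limsup (fun n => (((c n)⁻¹ : ℝ) : EReal) * ENNReal.log (P n (W n ⁻¹' A))) atTop ≤
      -(⨅ y ∈ closure A, (pushforwardRate f I y : EReal)) := by
  refine EReal.le_neg_of_forall_lt_imp_le_neg
    (limsup_inv_mul_log_nonpos hc fun n => prob_le_one) fun α hα hαA => ?_
  have hαlt : ∀ y ∈ closure A, α < pushforwardRate f I y := fun y hy =>
    EReal.coe_ennreal_lt_coe_ennreal_iff.1 (hαA.trans_le (iInf₂_le y hy))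
  obtain ⟨U, hU, hKU, hev⟩ := hW {x | I x ≤ α} (fun x hx => hx.trans_lt hα.lt_top)
    (hZ.2.1 α hα) (closure A)ᶜ isClosed_closure.isOpen_compl
    (fun x hx hxA => (hαlt _ hxA).not_ge ((pushforwardRate_apply_le x).trans hx))
  refine hZ.limsup_le_of_eventually_subset hc hU.isClosed_compl
    (fun x hxU => (not_le.1 fun hx => hxU (hKU hx)).le)
    (hev.mono fun n hn ω hω hωU => hn ω hωU (subset_closure hω))

theorem SatisfiesLDP.of_eventuallyTracks [T2Space Y] [∀ n, IsProbabilityMeasure (P n)]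
    (hZ : SatisfiesLDP P Z c I) (hc : Tendsto c atTop atTop)
    (hf : ContinuousOn f {x | I x < ⊤}) (hW : EventuallyTracks Z W f {x | I x < ⊤}) :
    SatisfiesLDP P W c (pushforwardRate f I) :=
  ⟨lowerSemicontinuous_pushforwardRate hZ.1 hZ.2.1 hf,
    fun _ hρ => isCompact_setOf_pushforwardRate_le hZ.1 hZ.2.1 hf hρ,
    fun A => ⟨hZ.neg_iInf_pushforwardRate_le_liminf hc hf hW A,
      hZ.limsup_le_neg_iInf_pushforwardRate hc hW A⟩⟩

end LargeDeviations

section Hadamard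

variable {𝒳 𝒴 : Type*} [AddCommGroup 𝒳] [Module ℝ 𝒳] [TopologicalSpace 𝒳]
  [AddCommGroup 𝒴] [Module ℝ 𝒴] [TopologicalSpace 𝒴]
  {D D₀ : Set 𝒳} {Φ Φ' : 𝒳 → 𝒴} {θ : 𝒳} {r : ℕ → ℝ}

lemma HadamardDiffAt.tendsto_smul_sub [FirstCountableTopology 𝒳]
    (hHad : HadamardDiffAt D Φ θ D₀ Φ') (hr0 : ∀ n, r n ≠ 0) (hr : Tendsto r atTop atTop)
    {h : 𝒳} (hh : h ∈ D₀) :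
    Tendsto (fun p : ℕ × 𝒳 => r p.1 • (Φ (θ + (r p.1)⁻¹ • p.2) - Φ θ))
      (atTop ×ˢ 𝓝 h ⊓ 𝓟 {p | θ + (r p.1)⁻¹ • p.2 ∈ D}) (𝓝 (Φ' h)) := by
  rw [← subtype_coe_map_comap, tendsto_map'_iff]
  refine tendsto_iff_seq_tendsto.2 fun p hp => ?_
  obtain ⟨hp₁, hp₂⟩ := tendsto_prod_iff'.1 (tendsto_comap_iff.1 hp)
  simpa only [Function.comp_def, inv_inv] using
    hHad.2 h hh (fun k => (r (p k).1.1)⁻¹) (fun k => (p k).1.2) (fun k => inv_ne_zero (hr0 _))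
      (hr.comp hp₁).inv_tendsto_atTop hp₂ (fun k => (p k).2)

lemma HadamardDiffAt.exists_isOpen_eventually_smul_sub_mem [FirstCountableTopology 𝒳]
    (hHad : HadamardDiffAt D Φ θ D₀ Φ') (hr0 : ∀ n, r n ≠ 0) (hr : Tendsto r atTop atTop)
    {K : Set 𝒳} (hK : IsCompact K) (hKD : K ⊆ D₀) {V : Set 𝒴} (hV : IsOpen V)
    (hKV : MapsTo Φ' K V) :
    ∃ U : Set 𝒳, IsOpen U ∧ K ⊆ U ∧ ∀ᶠ n in atTop, ∀ z ∈ U,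
      θ + (r n)⁻¹ • z ∈ D → r n • (Φ (θ + (r n)⁻¹ • z) - Φ θ) ∈ V := by
  have hloc : ∀ h ∈ K, ∀ᶠ p in atTop ×ˢ 𝓝 h,
      θ + (r p.1)⁻¹ • p.2 ∈ D → r p.1 • (Φ (θ + (r p.1)⁻¹ • p.2) - Φ θ) ∈ V := fun h hh =>
    eventually_inf_principal.1
      ((hHad.tendsto_smul_sub hr0 hr (hKD hh)).eventually (hV.mem_nhds (hKV hh)))
  obtain ⟨N, hN, S, hS, hNS⟩ := eventually_prod_iff.1 (hK.mem_prod_nhdsSet_of_forall hloc)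
  obtain ⟨U, hU, hKU, hUS⟩ := mem_nhdsSet_iff_exists.1 hS
  exact ⟨U, hU, hKU, hN.mono fun n hn z hz => hNS hn (hUS hz)⟩

end Hadamard

theorem delta_method_large_deviations_general
    {𝒳 𝒴 : Type*}
    [AddCommGroup 𝒳] [Module ℝ 𝒳] [TopologicalSpace 𝒳]
    [TopologicalSpace.MetrizableSpace 𝒳]
    [AddCommGroup 𝒴] [Module ℝ 𝒴] [TopologicalSpace 𝒴]
    [TopologicalSpace.MetrizableSpace 𝒴]
    (DΦ : Set 𝒳) (Φ : 𝒳 → 𝒴) (θ : 𝒳) (D₀ : Set 𝒳) (Φ' : 𝒳 → 𝒴)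
    (hHad : HadamardDiffAt DΦ Φ θ D₀ Φ')
    {Ω : ℕ → Type*} [∀ n, MeasurableSpace (Ω n)]
    (P : ∀ n, Measure (Ω n)) [∀ n, IsProbabilityMeasure (P n)]
    (Xn : ∀ n, Ω n → 𝒳) (hXn : ∀ n ω, Xn n ω ∈ DΦ)
    (r : ℕ → ℝ) (hrpos : ∀ n, 0 < r n)
    (hr : Filter.Tendsto r Filter.atTop Filter.atTop)
    (c : ℕ → ℝ) (hc : Filter.Tendsto c Filter.atTop Filter.atTop)
    (I : 𝒳 → ℝ≥0∞) (hI : {x | I x < ⊤} ⊆ D₀)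
    (hLDP : SatisfiesLDP P (fun n ω => r n • (Xn n ω - θ)) c I) :
    SatisfiesLDP P (fun n ω => r n • (Φ (Xn n ω) - Φ θ)) c
      (fun y => ⨅ (x : 𝒳) (_ : Φ' x = y), I x) := by
  have hr0 : ∀ n, r n ≠ 0 := fun n => (hrpos n).ne'
  have hX : ∀ n ω, θ + (r n)⁻¹ • (r n • (Xn n ω - θ)) = Xn n ω := fun n ω => by
    rw [inv_smul_smul₀ (hr0 n), add_sub_cancel]
  refine hLDP.of_eventuallyTracks hc (hHad.1.mono hI) fun K hKI hK V hV hKV => ?_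
  obtain ⟨U, hU, hKU, hev⟩ :=
    hHad.exists_isOpen_eventually_smul_sub_mem hr0 hr hK (hKI.trans hI) hV hKV
  refine ⟨U, hU, hKU, hev.mono fun n hn ω hω => ?_⟩
  simpa only [hX] using hn _ hω (by rw [hX]; exact hXn n ω)

/-- **Delta method for large deviations** (Gao–Zhao, Theorem 3.1, first part).
If `Φ` is Hadamard differentiable at `θ` tangentially to `D₀` and `{r_n(X_n − θ)}`
satisfies the LDP with speed `c_n⁻¹` and rate function `I` with `{I < ∞} ⊆ D₀`, then
`{r_n(Φ(X_n) − Φ(θ))}` satisfies the LDP with speed `c_n⁻¹` and rate function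
`I_{Φ'_θ}(y) = inf{I(x) : Φ'_θ(x) = y}`. -/
theorem delta_method_large_deviations
    {𝒳 𝒴 : Type*}
    [AddCommGroup 𝒳] [Module ℝ 𝒳] [TopologicalSpace 𝒳] [IsTopologicalAddGroup 𝒳]
    [ContinuousSMul ℝ 𝒳] [TopologicalSpace.MetrizableSpace 𝒳]
    [AddCommGroup 𝒴] [Module ℝ 𝒴] [TopologicalSpace 𝒴] [IsTopologicalAddGroup 𝒴]
    [ContinuousSMul ℝ 𝒴] [TopologicalSpace.MetrizableSpace 𝒴]
    (DΦ : Set 𝒳) (Φ : 𝒳 → 𝒴) (θ : 𝒳) (hθ : θ ∈ DΦ) (D₀ : Set 𝒳) (Φ' : 𝒳 → 𝒴)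
    (hHad : HadamardDiffAt DΦ Φ θ D₀ Φ')
    {Ω : ℕ → Type*} [∀ n, MeasurableSpace (Ω n)]
    (P : ∀ n, Measure (Ω n)) [∀ n, IsProbabilityMeasure (P n)]
    (Xn : ∀ n, Ω n → 𝒳) (hXn : ∀ n ω, Xn n ω ∈ DΦ)
    (r : ℕ → ℝ) (hrpos : ∀ n, 0 < r n)
    (hr : Filter.Tendsto r Filter.atTop Filter.atTop)
    (c : ℕ → ℝ) (hc : Filter.Tendsto c Filter.atTop Filter.atTop)
    (I : 𝒳 → ℝ≥0∞) (hI : {x | I x < ⊤} ⊆ D₀)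
    (hLDP : SatisfiesLDP P (fun n ω => r n • (Xn n ω - θ)) c I) :
    SatisfiesLDP P (fun n ω => r n • (Φ (Xn n ω) - Φ θ)) c
      (fun y => ⨅ (x : 𝒳) (_ : Φ' x = y), I x) :=
  delta_method_large_deviations_general DΦ Φ θ D₀ Φ' hHad P Xn hXn r hrpos hr c hc I hI hLDP
end
end

section
/- Let ν be a probability measure on ℝ, w ≥ 0 measurable, c ∈ ℝ and f₀ > 0. Set q = ∫_{(c,∞)} w dν and suppose V := ∫_{(c,∞)} w² dν − q² satisfies 0 < V < ∞. Then for every δ > 0, inf{ (1/2)∫h² dν : h ∈ L₂(ℝ,ν), ∫h dν = 0, (q/f₀)|∫_{(c,∞)} w h dν| ≥ δ } = (δ²/2) · f₀² / (q² V). -/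
/-!
Put `u = 𝟙_{(c,∞)} w − q`, the centred version of `𝟙_{(c,∞)} w`, so that `∫ u² dν = V`. For a
centred `h` the constraint only sees `∫_{(c,∞)} w h dν = ∫ u h dν`, and it reads
`|∫ u h dν| ≥ a := δ f₀ / q`. By Cauchy–Schwarz every admissible `h` has `∫ h² dν ≥ a² / V`, and
`h = (a / V) u` is admissible with equality, so the infimum is the minimum `a² / (2V)`. If `q = 0` no `h` is admissible, and both sides are `0`
(`sInf ∅ = 0` and `x / 0 = 0`).
-/

open MeasureTheory Set

variable {α : Type*} [MeasurableSpace α] {μ : Measure α} {s : Set α} {f g h u : α → ℝ}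

theorem integral_mul_sq_le_integral_sq_mul_integral_sq (hu : MemLp u 2 μ) (hh : MemLp h 2 μ) :
    (∫ x, u x * h x ∂μ) ^ 2 ≤ (∫ x, u x ^ 2 ∂μ) * ∫ x, h x ^ 2 ∂μ := by
  have key := real_inner_mul_inner_self_le (hu.toLp u) (hh.toLp h)
  simp only [L2.inner_def, RCLike.inner_apply, conj_trivial] at key
  have hint : ∀ {f g : α → ℝ} (hf : MemLp f 2 μ) (hg : MemLp g 2 μ),
      ∫ x, hg.toLp g x * hf.toLp f x ∂μ = ∫ x, f x * g x ∂μ := fun hf hg =>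
    integral_congr_ae <| by
      filter_upwards [hf.coeFn_toLp, hg.coeFn_toLp] with x hfx hgx
      rw [hfx, hgx, mul_comm]
  rw [hint hu hh, hint hu hu, hint hh hh] at key
  simpa only [sq] using key

theorem le_integral_sq_of_le_abs_integral_mul {a V : ℝ} (hu : MemLp u 2 μ)
    (huV : ∫ x, u x ^ 2 ∂μ = V) (hV : 0 < V) (ha : 0 ≤ a) (hh : MemLp h 2 μ)
    (hah : a ≤ |∫ x, u x * h x ∂μ|) :
    a ^ 2 / V ≤ ∫ x, h x ^ 2 ∂μ := by
  have hcs := integral_mul_sq_le_integral_sq_mul_integral_sq hu hh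
  rw [huV, ← sq_abs] at hcs
  rw [div_le_iff₀' hV]
  nlinarith [pow_le_pow_left₀ ha hah 2]

theorem isLeast_half_integral_sq_of_le_abs_integral_mul {a V : ℝ} (hu : MemLp u 2 μ)
    (hu0 : ∫ x, u x ∂μ = 0) (huV : ∫ x, u x ^ 2 ∂μ = V) (hV : 0 < V) (ha : 0 ≤ a) :
    IsLeast {r : ℝ | ∃ h : α → ℝ, MemLp h 2 μ ∧ ∫ x, h x ∂μ = 0 ∧
        a ≤ |∫ x, u x * h x ∂μ| ∧ r = 2⁻¹ * ∫ x, h x ^ 2 ∂μ} (a ^ 2 / (2 * V)) := by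
  refine ⟨⟨fun x => a / V * u x, hu.const_mul _, ?_, ?_, ?_⟩, ?_⟩
  · rw [integral_const_mul, hu0, mul_zero]
  · simp_rw [mul_left_comm (u _), ← sq]
    rw [integral_const_mul, huV, div_mul_cancel₀ a hV.ne', abs_of_nonneg ha]
  · simp_rw [mul_pow]
    rw [integral_const_mul, huV]
    field_simp
  · rintro r ⟨h, hh, -, hah, rfl⟩
    have := le_integral_sq_of_le_abs_integral_mul hu huV hV ha hh hah
    rw [div_mul_eq_div_div_swap]
    linarith [div_le_div_of_nonneg_right this (zero_le_two (α := ℝ))]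

theorem integral_sub_integral_self [IsProbabilityMeasure μ] (hg : Integrable g μ) :
    ∫ x, (g x - ∫ y, g y ∂μ) ∂μ = 0 := by
  rw [integral_sub hg (integrable_const _), integral_const, probReal_univ, one_smul, sub_self]

theorem integral_sub_integral_sq [IsProbabilityMeasure μ] (hg : MemLp g 2 μ) :
    ∫ x, (g x - ∫ y, g y ∂μ) ^ 2 ∂μ = ∫ x, g x ^ 2 ∂μ - (∫ x, g x ∂μ) ^ 2 := by
  rw [← ProbabilityTheory.variance_eq_integral hg.aemeasurable,
    ProbabilityTheory.variance_eq_sub hg]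
  rfl

theorem integral_sub_const_mul_of_integral_eq_zero (hfh : Integrable (fun x => f x * h x) μ)
    (hh : Integrable h μ) (hh0 : ∫ x, h x ∂μ = 0) (m : ℝ) :
    ∫ x, (f x - m) * h x ∂μ = ∫ x, f x * h x ∂μ := by
  simp_rw [sub_mul]
  rw [integral_sub hfh (hh.const_mul m), integral_const_mul, hh0, mul_zero, sub_zero]

theorem integral_indicator_sq (hs : MeasurableSet s) :
    ∫ x, s.indicator f x ^ 2 ∂μ = ∫ x in s, f x ^ 2 ∂μ := by
  rw [← integral_indicator hs]
  congr with x
  exact (congrFun (indicator_comp_of_zero (g := fun y : ℝ => y ^ 2) (zero_pow two_ne_zero)) x).symm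

theorem setIntegral_mul_eq_integral_indicator_mul (hs : MeasurableSet s) :
    ∫ x in s, f x * h x ∂μ = ∫ x, s.indicator f x * h x ∂μ := by
  simp_rw [← indicator_mul_left, integral_indicator hs]

theorem variational_problem_kappa_one_general
    (ν : Measure ℝ) [IsProbabilityMeasure ν]
    (w : ℝ → ℝ) (hwmeas : Measurable w) (hwnonneg : ∀ x, 0 ≤ w x)
    (c f₀ : ℝ) (hf₀ : 0 < f₀)
    (hw2 : IntegrableOn (fun x => (w x) ^ 2) (Set.Ioi c) ν)
    (q : ℝ) (hq : q = ∫ x in Set.Ioi c, w x ∂ν)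
    (V : ℝ) (hV : V = (∫ x in Set.Ioi c, (w x) ^ 2 ∂ν) - q ^ 2) (hVpos : 0 < V)
    (δ : ℝ) (hδ : 0 < δ) :
    sInf {r : ℝ | ∃ h : ℝ → ℝ, MemLp h 2 ν ∧ (∫ x, h x ∂ν) = 0 ∧
        δ ≤ (q / f₀) * |∫ x in Set.Ioi c, w x * h x ∂ν| ∧
        r = 2⁻¹ * ∫ x, (h x) ^ 2 ∂ν} =
      δ ^ 2 / 2 * (f₀ ^ 2 / (q ^ 2 * V)) := by
  set g := (Ioi c).indicator w
  have hg : MemLp g 2 ν := (memLp_indicator_iff_restrict measurableSet_Ioi).2 <|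
    (memLp_two_iff_integrable_sq hwmeas.aestronglyMeasurable).2 hw2
  have hgq : ∫ x, g x ∂ν = q := by rw [hq, integral_indicator measurableSet_Ioi]
  have hgV : ∫ x, g x ^ 2 ∂ν - q ^ 2 = V := by rw [integral_indicator_sq measurableSet_Ioi, hV]
  obtain hq0 | hqpos := (show 0 ≤ q from hq ▸ setIntegral_nonneg measurableSet_Ioi
    fun x _ => hwnonneg x).eq_or_lt
  · subst hq0
    convert Real.sInf_empty using 2
    · refine eq_empty_of_forall_notMem ?_
      rintro r ⟨h, -, -, hδh, -⟩
      simp only [zero_div, zero_mul] at hδh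
      linarith
    · simp
  convert (isLeast_half_integral_sq_of_le_abs_integral_mul (u := fun x => g x - q)
    (hg.sub (memLp_const q)) (hgq ▸ integral_sub_integral_self (hg.integrable one_le_two))
    (by rw [← hgq, integral_sub_integral_sq hg, hgq, hgV]) hVpos
    (by positivity : 0 ≤ δ * f₀ / q)).csInf_eq using 1
  · congr 1 with r
    refine exists_congr fun h => and_congr_right fun hh => and_congr_right fun hh0 => ?_
    rw [setIntegral_mul_eq_integral_indicator_mul measurableSet_Ioi,
      ← integral_sub_const_mul_of_integral_eq_zero (hg.integrable_mul hh)
        (hh.integrable one_le_two) hh0 q,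
      div_mul_eq_mul_div, le_div_iff₀ hf₀, div_le_iff₀ hqpos, mul_comm q]
  · field_simp

/-- **Explicit solution of the variational problem for `κ₁`** (Section 5).
With `q = ∫_{(c,∞)} w dν` and `V = ∫_{(c,∞)} w² dν − q² ∈ (0,∞)`, for every `δ > 0`,
`inf{(1/2)∫h²dν : ∫h dν = 0, (q/f₀)|∫_{(c,∞)} w h dν| ≥ δ} = (δ²/2) f₀²/(q² V)`. -/
theorem variational_problem_kappa_one
    (ν : Measure ℝ) [IsProbabilityMeasure ν]
    (w : ℝ → ℝ) (hwmeas : Measurable w) (hwnonneg : ∀ x, 0 ≤ w x)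
    (c f₀ : ℝ) (hf₀ : 0 < f₀)
    (hw1 : IntegrableOn w (Set.Ioi c) ν)
    (hw2 : IntegrableOn (fun x => (w x) ^ 2) (Set.Ioi c) ν)
    (q : ℝ) (hq : q = ∫ x in Set.Ioi c, w x ∂ν)
    (V : ℝ) (hV : V = (∫ x in Set.Ioi c, (w x) ^ 2 ∂ν) - q ^ 2) (hVpos : 0 < V)
    (δ : ℝ) (hδ : 0 < δ) :
    sInf {r : ℝ | ∃ h : ℝ → ℝ, MemLp h 2 ν ∧ (∫ x, h x ∂ν) = 0 ∧
        δ ≤ (q / f₀) * |∫ x in Set.Ioi c, w x * h x ∂ν| ∧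
        r = 2⁻¹ * ∫ x, (h x) ^ 2 ∂ν} =
      δ ^ 2 / 2 * (f₀ ^ 2 / (q ^ 2 * V)) :=
  variational_problem_kappa_one_general ν w hwmeas hwnonneg c f₀ hf₀ hw2 q hq V hV hVpos δ hδ
end

section
/- Let μ and ν be probability measures on ℝ with μ ≪ ν and w = dμ/dν, let c ∈ ℝ, set q = μ((c,∞)), and suppose D := ∫_{(c,∞)} (x − c)² w(x)² ν(dx) − (∫_{(c,∞)} (x − c) μ(dx))² satisfies 0 < D < ∞. Then for every δ > 0, inf{ (1/2)∫h² dν : h ∈ L₂(ℝ,ν), ∫h dν = 0, |∫_{(c,∞)} (x − c) w(x) h(x) ν(dx)| ≥ δ } = δ²/(2D). Equivalently (by Fubini's theorem, since ∫_c^∞ ∫ 1{y > x} w(y)h(y) ν(dy) dx = ∫_{(c,∞)} (y − c) w(y)h(y) ν(dy)), the quantity κ₂(q,δ) = inf{ I_ν(η) : η ∈ M_b^{ν,0}, |∫_c^∞ η(1{· > x}w) dx| ≥ δ } equals δ²/2 times the inverse of c²E_ν[w²1{X>c}] − 2c E_ν[Xw²1{X>c}] + E_ν[X²w²1{X>c}]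 − (E_μ[X1{X>c}] − qc)². -/
open MeasureTheory ProbabilityTheory Filter Set
open scoped Topology UniformConvergence ENNReal NNReal

noncomputable section

/-!
With `G = 1_{(c,∞)}(x) (x - c) w(x)` the constraint reads `δ ≤ |∫ G h dν|`, and for centred `h`
the integral `∫ G h dν` is the covariance of `G` and `h` under `ν`. Cauchy–Schwarz for the
covariance gives `δ² ≤ Var_ν(G) ∫ h² dν` with `Var_ν(G) = D`, and `h = (δ / D)(G - E_ν G)` attains
equality. A signed measure `η ∈ M_b^{ν,0}` of finite rate is `h ν` for the centred density
`h = dη/dν ∈ L²(ν)`, and Fubini turns `∫_c^∞ η(1{· > x} w) dx` into `∫_{(c,∞)} (y - c) w h dν`,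
so the problem over signed measures has the same value.
-/

namespace ProbabilityTheory

variable {Ω : Type*} {mΩ : MeasurableSpace Ω} {μ : Measure Ω} {X Y : Ω → ℝ}

lemma covariance_sq_le_variance_mul_variance [IsFiniteMeasure μ] (hX : MemLp X 2 μ)
    (hY : MemLp Y 2 μ) : cov[X, Y; μ] ^ 2 ≤ Var[X; μ] * Var[Y; μ] := by
  have hquad : ∀ t : ℝ, 0 ≤ Var[X; μ] * (t * t) + 2 * cov[X, Y; μ] * t + Var[Y; μ] := by
    intro t
    have := variance_add (hX.const_smul t) hY
    rw [variance_smul, covariance_smul_left] at this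
    nlinarith [variance_nonneg (t • X + Y) μ]
  have := discrim_le_zero hquad
  rw [discrim] at this
  nlinarith

lemma covariance_eq_integral_mul_of_integral_eq_zero [IsProbabilityMeasure μ] (hX : MemLp X 2 μ)
    (hY : MemLp Y 2 μ) (hY0 : μ[Y] = 0) : cov[X, Y; μ] = ∫ ω, X ω * Y ω ∂μ := by
  simp [covariance_eq_sub hX hY, hY0]

lemma variance_indicator [IsProbabilityMeasure μ] {s : Set Ω} (hs : MeasurableSet s)
    (hX : MemLp X 2 (μ.restrict s)) :
    Var[s.indicator X; μ] = ∫ ω in s, X ω ^ 2 ∂μ - (∫ ω in s, X ω ∂μ) ^ 2 := by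
  have hsq : s.indicator X ^ 2 = s.indicator fun ω => X ω ^ 2 :=
    (indicator_comp_of_zero (g := fun t : ℝ => t ^ 2) (zero_pow two_ne_zero)).symm
  rw [variance_eq_sub ((memLp_indicator_iff_restrict hs).2 hX), hsq, integral_indicator hs,
    integral_indicator hs]

theorem isLeast_half_integral_sq_of_le_abs_integral_mul [IsProbabilityMeasure μ] {G : Ω → ℝ}
    (hG : MemLp G 2 μ) (hV : 0 < Var[G; μ]) {δ : ℝ} (hδ : 0 ≤ δ) :
    IsLeast {r | ∃ h : Ω → ℝ, MemLp h 2 μ ∧ ∫ x, h x ∂μ = 0 ∧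
        δ ≤ |∫ x, G x * h x ∂μ| ∧ r = 2⁻¹ * ∫ x, h x ^ 2 ∂μ}
      (δ ^ 2 / (2 * Var[G; μ])) := by
  constructor
  · set h₀ : Ω → ℝ := fun x => δ / Var[G; μ] * (G x - μ[G])
    have hh₀ : MemLp h₀ 2 μ := (hG.sub (memLp_const _)).const_mul _
    have hmean : ∫ x, h₀ x ∂μ = 0 := by
      simp [h₀, integral_const_mul, integral_sub (hG.integrable one_le_two) (integrable_const _)]
    refine ⟨h₀, hh₀, hmean, ?_, ?_⟩
    · rw [← covariance_eq_integral_mul_of_integral_eq_zero hG hh₀ hmean,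
        covariance_const_mul_right, covariance_sub_const_right (hG.integrable one_le_two),
        covariance_self hG.aemeasurable, div_mul_cancel₀ _ hV.ne', abs_of_nonneg hδ]
    · rw [← variance_of_integral_eq_zero hh₀.aemeasurable hmean, variance_const_mul,
        variance_sub_const hG.aestronglyMeasurable]
      field_simp
  · rintro _ ⟨h, hh, h0, hδh, rfl⟩
    have hCS := covariance_sq_le_variance_mul_variance hG hh
    rw [covariance_eq_integral_mul_of_integral_eq_zero hG hh h0,
      variance_of_integral_eq_zero hh.aemeasurable h0] at hCS
    have : δ ^ 2 ≤ (∫ x, G x * h x ∂μ) ^ 2 := (pow_le_pow_left₀ hδ hδh 2).trans_eq (sq_abs _)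
    rw [div_le_iff₀ (by positivity)]
    nlinarith

end ProbabilityTheory

namespace MeasureTheory

variable {α : Type*} [MeasurableSpace α] {ν : Measure α} {s : Set α} {h f : α → ℝ}

lemma integral_indicator_mul (hs : MeasurableSet s) (g k : α → ℝ) :
    ∫ x, s.indicator g x * k x ∂ν = ∫ x in s, g x * k x ∂ν := by
  simp only [← indicator_mul_left, integral_indicator hs]

lemma setIntegral_sub_const [IsFiniteMeasure ν] (hf : IntegrableOn f s ν) (c : ℝ) :
    ∫ x in s, (f x - c) ∂ν = ∫ x in s, f x ∂ν - (ν s).toReal * c := by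
  rw [integral_sub hf integrableOn_const, setIntegral_const, smul_eq_mul, measureReal_def]

lemma integral_withDensity_ofReal (hh : AEMeasurable h ν) (g : α → ℝ) :
    ∫ x, g x ∂ν.withDensity (fun x => ENNReal.ofReal (h x)) = ∫ x, max (h x) 0 * g x ∂ν := by
  rw [integral_withDensity_eq_integral_toReal_smul₀ hh.ennreal_ofReal
    (ae_of_all _ fun _ => ENNReal.ofReal_lt_top)]
  simp [ENNReal.toReal_ofReal']

lemma setIntegral_withDensity_ofReal (hh : AEMeasurable h (ν.restrict s)) (h0 : ∀ x, 0 ≤ h x)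
    (hs : MeasurableSet s) (g : α → ℝ) :
    ∫ x in s, g x ∂ν.withDensity (fun x => ENNReal.ofReal (h x)) = ∫ x in s, g x * h x ∂ν := by
  rw [restrict_withDensity hs, integral_withDensity_ofReal hh]
  simp only [max_eq_left (h0 _), mul_comm]

lemma SignedMeasure.toJordanDecomposition_withDensityᵥ (hm : Measurable h) (hh : Integrable h ν) :
    SignedMeasure.toJordanDecomposition (ν.withDensityᵥ h) =
      @JordanDecomposition.mk α _
        (ν.withDensity fun x => ENNReal.ofReal (h x)) (ν.withDensity fun x => ENNReal.ofReal (-h x))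
        (isFiniteMeasure_withDensity_ofReal hh.hasFiniteIntegral)
        (isFiniteMeasure_withDensity_ofReal hh.neg.hasFiniteIntegral)
        (withDensity_ofReal_mutuallySingular hm) :=
  toJordanDecomposition_eq (withDensityᵥ_eq_withDensity_pos_part_sub_withDensity_neg_part hh)

lemma integrable_max_zero_mul (hh : AEStronglyMeasurable h ν) (hf : AEStronglyMeasurable f ν)
    (hfh : Integrable (fun x => f x * h x) ν) : Integrable (fun x => max (h x) 0 * f x) ν := by
  refine hfh.mono ((hh.aemeasurable.max aemeasurable_const).aestronglyMeasurable.mul hf)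
    (ae_of_all _ fun x => ?_)
  rw [norm_mul, norm_mul, mul_comm, Real.norm_of_nonneg (le_max_right _ _)]
  gcongr
  exact max_le (Real.le_norm_self _) (norm_nonneg _)

lemma smInt_withDensityᵥ (hh : Integrable h ν) (hf : AEStronglyMeasurable f ν)
    (hfh : Integrable (fun x => f x * h x) ν) :
    smInt (ν.withDensityᵥ h) f = ∫ x, f x * h x ∂ν := by
  wlog hm : Measurable h generalizing h
  · have hae := hh.aemeasurable.ae_eq_mk
    have hint_eq : ∫ x, f x * h x ∂ν = ∫ x, f x * hh.aemeasurable.mk h x ∂ν :=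
      integral_congr_ae (hae.mono fun x hx => congrArg (f x * ·) hx)
    rw [WithDensityᵥEq.congr_ae hae, hint_eq,
      this (hh.congr hae) (hfh.congr (hae.mono fun x hx => congrArg (f x * ·) hx))
        hh.aemeasurable.measurable_mk]
  have hfh' : Integrable (fun x => f x * -h x) ν := by simpa using hfh.neg
  rw [smInt, SignedMeasure.toJordanDecomposition_withDensityᵥ hm hh,
    integral_withDensity_ofReal hm.aemeasurable,
    integral_withDensity_ofReal (h := fun x => -h x) hm.neg.aemeasurable,
    ← integral_sub (integrable_max_zero_mul hh.1 hf hfh)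
      (integrable_max_zero_mul (h := fun x => -h x) hh.1.neg hf hfh')]
  congr with x
  rw [← sub_mul, max_zero_sub_max_neg_zero_eq_self, mul_comm]

end MeasureTheory

section RateFunction

variable {α : Type*} [MeasurableSpace α] {ν : Measure α} {η : SignedMeasure α}

lemma memMb0_withDensityᵥ {h : α → ℝ} (hh : Integrable h ν) (h0 : ∫ x, h x ∂ν = 0) :
    MemMb0 ν (ν.withDensityᵥ h) :=
  ⟨Measure.withDensityᵥ_absolutelyContinuous ν h,
    by rw [withDensityᵥ_apply hh MeasurableSet.univ, setIntegral_univ, h0]⟩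

lemma MemMb0.integral_rnDeriv [SigmaFinite ν] (hη : MemMb0 ν η) : ∫ x, η.rnDeriv ν x ∂ν = 0 := by
  rw [← setIntegral_univ, ← withDensityᵥ_apply (SignedMeasure.integrable_rnDeriv η ν)
    MeasurableSet.univ, SignedMeasure.withDensityᵥ_rnDeriv_eq η ν hη.1, hη.2]

lemma MemMb0.memLp_rnDeriv (hη : MemMb0 ν η) (hfin : rateFn ν η ≠ ⊤) :
    MemLp (η.rnDeriv ν) 2 ν := by
  have hm := SignedMeasure.measurable_rnDeriv η ν
  rw [memLp_two_iff_integrable_sq hm.aestronglyMeasurable,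
    ← lintegral_ofReal_ne_top_iff_integrable (hm.pow_const 2).aestronglyMeasurable
      (ae_of_all _ fun _ => sq_nonneg _)]
  refine fun htop => hfin ?_
  rw [rateFn, if_pos hη, htop, ENNReal.mul_top (by norm_num)]

lemma rateFn_withDensityᵥ [IsFiniteMeasure ν] {h : α → ℝ} (hh : MemLp h 2 ν)
    (h0 : ∫ x, h x ∂ν = 0) :
    rateFn ν (ν.withDensityᵥ h) = ENNReal.ofReal (2⁻¹ * ∫ x, h x ^ 2 ∂ν) := by
  have hint := hh.integrable one_le_two
  have hmem := memMb0_withDensityᵥ hint h0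
  have hrn : SignedMeasure.rnDeriv (ν.withDensityᵥ h) ν =ᵐ[ν] h :=
    (SignedMeasure.integrable_rnDeriv _ _).ae_eq_of_withDensityᵥ_eq hint
      (SignedMeasure.withDensityᵥ_rnDeriv_eq _ _ hmem.1)
  rw [rateFn, if_pos hmem, lintegral_congr_ae (hrn.mono fun x hx => by rw [hx]),
    ← ofReal_integral_eq_lintegral_ofReal hh.integrable_sq (ae_of_all _ fun _ => sq_nonneg _),
    ENNReal.ofReal_mul (by norm_num), ENNReal.ofReal_inv_of_pos two_pos, ENNReal.ofReal_ofNat]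

theorem iInf_rateFn_eq_ofReal [IsFiniteMeasure ν] (Φ : SignedMeasure α → Prop) {a : ℝ}
    (ha : IsLeast {r | ∃ h : α → ℝ, MemLp h 2 ν ∧ ∫ x, h x ∂ν = 0 ∧ Φ (ν.withDensityᵥ h) ∧
      r = 2⁻¹ * ∫ x, h x ^ 2 ∂ν} a) :
    ⨅ (η : SignedMeasure α) (_ : MemMb0 ν η ∧ Φ η), rateFn ν η = ENNReal.ofReal a := by
  obtain ⟨⟨h₀, hh₀, h₀0, hΦ₀, rfl⟩, hlow⟩ := ha
  refine le_antisymm ?_ (le_iInf₂ fun η ⟨hη, hΦ⟩ => ?_)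
  · calc _ ≤ rateFn ν (ν.withDensityᵥ h₀) :=
          iInf₂_le _ ⟨memMb0_withDensityᵥ (hh₀.integrable one_le_two) h₀0, hΦ₀⟩
      _ = _ := rateFn_withDensityᵥ hh₀ h₀0
  by_cases hfin : rateFn ν η = ⊤
  · exact hfin ▸ le_top
  have hL2 := hη.memLp_rnDeriv hfin
  rw [← SignedMeasure.withDensityᵥ_rnDeriv_eq η ν hη.1] at hΦ ⊢
  rw [rateFn_withDensityᵥ hL2 hη.integral_rnDeriv]
  exact ENNReal.ofReal_le_ofReal (hlow ⟨_, hL2, hη.integral_rnDeriv, hΦ, rfl⟩)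

end RateFunction

lemma setIntegral_Ioi_indicator_Iio_const {c y : ℝ} (hy : c < y) (a : ℝ) :
    ∫ x in Ioi c, (Iio y).indicator (fun _ => a) x = (y - c) * a := by
  rw [integral_indicator_const a measurableSet_Iio, measureReal_restrict_apply measurableSet_Iio,
    Iio_inter_Ioi, Real.volume_real_Ioo_of_le hy.le, smul_eq_mul]

lemma setIntegral_Ioi_setIntegral_Ioi {ν : Measure ℝ} [SFinite ν] {c : ℝ} {F : ℝ → ℝ}
    (hF : AEStronglyMeasurable F (ν.restrict (Ioi c)))
    (hF2 : IntegrableOn (fun y => (y - c) * F y) (Ioi c) ν) :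
    ∫ x in Ioi c, ∫ y in Ioi x, F y ∂ν = ∫ y in Ioi c, (y - c) * F y ∂ν := by
  set f : ℝ → ℝ → ℝ := fun x y => (Iio y).indicator (fun _ => F y) x
  have hmeas : AEStronglyMeasurable (Function.uncurry f)
      ((volume.restrict (Ioi c)).prod (ν.restrict (Ioi c))) := by
    have := (hF.comp_snd (μ := volume.restrict (Ioi c))).indicator
      (measurableSet_lt measurable_fst measurable_snd)
    convert this using 1
    ext ⟨x, y⟩
    simp [f, indicator_apply]
  have hf : Integrable (Function.uncurry f)
      ((volume.restrict (Ioi c)).prod (ν.restrict (Ioi c))) := by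
    refine (integrable_prod_iff' hmeas).2 ⟨?_, hF2.norm.congr ?_⟩
    · refine ae_of_all _ fun y => (integrable_indicator_iff measurableSet_Iio).2 ?_
      refine integrableOn_const (C := F y) ?_
      rw [Measure.restrict_apply measurableSet_Iio, Iio_inter_Ioi]
      exact measure_Ioo_lt_top.ne
    · filter_upwards [ae_restrict_mem measurableSet_Ioi] with y hy
      simp only [Function.uncurry_apply_pair, f, norm_indicator_eq_indicator_norm]
      rw [setIntegral_Ioi_indicator_Iio_const hy, norm_mul, Real.norm_of_nonneg (sub_pos.2 hy).le]
  calc ∫ x in Ioi c, ∫ y in Ioi x, F y ∂ν = ∫ x in Ioi c, ∫ y in Ioi c, f x y ∂ν := by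
        refine setIntegral_congr_fun measurableSet_Ioi fun x hx => ?_
        have hfx : f x = (Ioi x).indicator F := by ext y; simp [f, indicator_apply]
        rw [hfx, setIntegral_indicator measurableSet_Ioi, Ioi_inter_Ioi, max_eq_right (le_of_lt hx)]
    _ = ∫ y in Ioi c, (∫ x in Ioi c, f x y) ∂ν := integral_integral_swap hf
    _ = ∫ y in Ioi c, (y - c) * F y ∂ν :=
        setIntegral_congr_fun measurableSet_Ioi fun y hy => setIntegral_Ioi_indicator_Iio_const hy _

section Moments

variable {μ : Measure ℝ} {s : Set ℝ} {f : ℝ → ℝ} (c : ℝ)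

lemma integrableOn_sub_sq_mul (hf : IntegrableOn f s μ) (hxf : IntegrableOn (fun x => x * f x) s μ)
    (hx2f : IntegrableOn (fun x => x ^ 2 * f x) s μ) :
    IntegrableOn (fun x => (x - c) ^ 2 * f x) s μ :=
  ((hx2f.sub (hxf.const_mul (2 * c))).add (hf.const_mul (c ^ 2))).congr
    (ae_of_all _ fun x => by simp only [Pi.add_apply, Pi.sub_apply]; ring)

lemma setIntegral_sub_sq_mul (hf : IntegrableOn f s μ) (hxf : IntegrableOn (fun x => x * f x) s μ)
    (hx2f : IntegrableOn (fun x => x ^ 2 * f x) s μ) :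
    ∫ x in s, (x - c) ^ 2 * f x ∂μ =
      c ^ 2 * ∫ x in s, f x ∂μ - 2 * c * ∫ x in s, x * f x ∂μ + ∫ x in s, x ^ 2 * f x ∂μ := by
  have hx2f_sub : IntegrableOn (fun x => x ^ 2 * f x - 2 * c * (x * f x)) s μ :=
    hx2f.sub (hxf.const_mul _)
  calc ∫ x in s, (x - c) ^ 2 * f x ∂μ
      = ∫ x in s, (x ^ 2 * f x - 2 * c * (x * f x) + c ^ 2 * f x) ∂μ := by
        congr with x; ring
    _ = _ := by
        rw [integral_add hx2f_sub (hf.const_mul _), integral_sub hx2f (hxf.const_mul _),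
          integral_const_mul, integral_const_mul]
        ring

end Moments

section WeightedTail

variable {ν : Measure ℝ} {c : ℝ} {w h : ℝ → ℝ}

lemma setIntegral_Ioi_setIntegral_Ioi_mul [SFinite ν] (hw : MemLp w 2 (ν.restrict (Ioi c)))
    (hxw : MemLp (fun y => (y - c) * w y) 2 (ν.restrict (Ioi c))) (hh : MemLp h 2 ν) :
    ∫ x in Ioi c, ∫ y in Ioi x, w y * h y ∂ν = ∫ y in Ioi c, (y - c) * w y * h y ∂ν := by
  rw [setIntegral_Ioi_setIntegral_Ioi (F := fun y => w y * h y)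
    (hw.integrable_mul (hh.restrict _)).1
    ((hxw.integrable_mul (hh.restrict _)).congr (ae_of_all _ fun y => mul_assoc _ _ _))]
  simp only [mul_assoc]

lemma setIntegral_smInt_withDensityᵥ_indicator_Ioi [IsFiniteMeasure ν]
    (hw : MemLp w 2 (ν.restrict (Ioi c)))
    (hxw : MemLp (fun y => (y - c) * w y) 2 (ν.restrict (Ioi c))) (hh : MemLp h 2 ν) :
    ∫ x in Ioi c, smInt (ν.withDensityᵥ h) ((Ioi x).indicator w) =
      ∫ y in Ioi c, (y - c) * w y * h y ∂ν := by
  rw [← setIntegral_Ioi_setIntegral_Ioi_mul hw hxw hh]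
  refine setIntegral_congr_fun measurableSet_Ioi fun x hx => ?_
  have hle : ν.restrict (Ioi x) ≤ ν.restrict (Ioi c) :=
    Measure.restrict_mono (Ioi_subset_Ioi (le_of_lt hx)) le_rfl
  have hind : (fun y => (Ioi x).indicator w y * h y) = (Ioi x).indicator fun y => w y * h y :=
    funext fun y => (indicator_mul_left _ _ _).symm
  have hint : Integrable (fun y => (Ioi x).indicator w y * h y) ν := by
    rw [hind, integrable_indicator_iff measurableSet_Ioi]
    exact (hw.integrable_mul (hh.restrict _)).mono_measure hle
  rw [smInt_withDensityᵥ (hh.integrable one_le_two)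
      ((aestronglyMeasurable_indicator_iff measurableSet_Ioi).2 (hw.1.mono_measure hle)) hint,
    hind, integral_indicator measurableSet_Ioi]

end WeightedTail

/-- **Explicit solution of the variational problem for `κ₂`** (Section 5). With
`q = μ((c,∞))` and `D = ∫_{(c,∞)}(x−c)²w(x)² ν(dx) − (∫_{(c,∞)}(x−c) μ(dx))² ∈ (0,∞)`,
for every `δ > 0` the value of
`inf{(1/2)∫h²dν : ∫h dν = 0, |∫_{(c,∞)}(x−c)w(x)h(x) ν(dx)| ≥ δ}` is `δ²/(2D)`;
equivalently, by Fubini's theorem,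
`κ₂(q,δ) = inf{I_ν(η) : η ∈ M_b^{ν,0}, |∫_c^∞ η(1{·>x}w)dx| ≥ δ}` equals `δ²/2` times the
inverse of `c²E_ν[w²1] − 2cE_ν[Xw²1] + E_ν[X²w²1] − (E_μ[X1] − qc)²`. -/
theorem variational_problem_kappa_two
    (ν : Measure ℝ) [IsProbabilityMeasure ν]
    (w : ℝ → ℝ) (hwmeas : Measurable w) (hwnonneg : ∀ x, 0 ≤ w x)
    (μ : Measure ℝ) [IsProbabilityMeasure μ]
    (hμν : μ = ν.withDensity (fun x => ENNReal.ofReal (w x)))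
    (c : ℝ)
    (hw2 : IntegrableOn (fun x => (w x) ^ 2) (Set.Ioi c) ν)
    (hxw2 : IntegrableOn (fun x => x * (w x) ^ 2) (Set.Ioi c) ν)
    (hx2w2 : IntegrableOn (fun x => x ^ 2 * (w x) ^ 2) (Set.Ioi c) ν)
    (hxμ : IntegrableOn (fun x => x) (Set.Ioi c) μ)
    (q : ℝ) (hq : q = (μ (Set.Ioi c)).toReal)
    (D : ℝ)
    (hD : D = (∫ x in Set.Ioi c, (x - c) ^ 2 * (w x) ^ 2 ∂ν) -
      (∫ x in Set.Ioi c, (x - c) ∂μ) ^ 2)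
    (hDpos : 0 < D)
    (δ : ℝ) (hδ : 0 < δ) :
    -- the value of the variational problem in density form
    sInf {r : ℝ | ∃ h : ℝ → ℝ, MemLp h 2 ν ∧ (∫ x, h x ∂ν) = 0 ∧
        δ ≤ |∫ x in Set.Ioi c, (x - c) * w x * h x ∂ν| ∧
        r = 2⁻¹ * ∫ x, (h x) ^ 2 ∂ν} =
      δ ^ 2 / (2 * D) ∧
    -- the Fubini identity behind the equivalent formulation
    (∀ h : ℝ → ℝ, MemLp h 2 ν →
      (∫ x in Set.Ioi c, (∫ y in Set.Ioi x, w y * h y ∂ν)) =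
        ∫ y in Set.Ioi c, (y - c) * w y * h y ∂ν) ∧
    -- the equivalent formulation of `κ₂` over signed measures
    (⨅ (η : SignedMeasure ℝ)
        (_ : MemMb0 ν η ∧
          δ ≤ |∫ x in Set.Ioi c, smInt η (Set.indicator (Set.Ioi x) w)|),
      rateFn ν η) =
      ENNReal.ofReal (δ ^ 2 / 2 *
        (c ^ 2 * (∫ x in Set.Ioi c, (w x) ^ 2 ∂ν) -
          2 * c * (∫ x in Set.Ioi c, x * (w x) ^ 2 ∂ν) +
          (∫ x in Set.Ioi c, x ^ 2 * (w x) ^ 2 ∂ν) -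
          ((∫ x in Set.Ioi c, x ∂μ) - q * c) ^ 2)⁻¹) := by
  have hw : MemLp w 2 (ν.restrict (Ioi c)) :=
    (memLp_two_iff_integrable_sq hwmeas.aestronglyMeasurable).2 hw2
  have hxw : MemLp (fun x => (x - c) * w x) 2 (ν.restrict (Ioi c)) :=
    (memLp_two_iff_integrable_sq (by fun_prop)).2
      ((integrableOn_sub_sq_mul c hw2 hxw2 hx2w2).congr (ae_of_all _ fun x => by ring))
  have hVar : Var[(Ioi c).indicator (fun x => (x - c) * w x); ν] = D := by
    rw [variance_indicator measurableSet_Ioi hxw, hD, hμν,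
      setIntegral_withDensity_ofReal hwmeas.aemeasurable hwnonneg measurableSet_Ioi]
    simp only [mul_pow]
  have hleast := isLeast_half_integral_sq_of_le_abs_integral_mul
    ((memLp_indicator_iff_restrict measurableSet_Ioi).2 hxw) (hVar ▸ hDpos) hδ.le
  simp only [integral_indicator_mul measurableSet_Ioi, hVar] at hleast
  refine ⟨hleast.csInf_eq, fun h hh => setIntegral_Ioi_setIntegral_Ioi_mul hw hxw hh, ?_⟩
  rw [← setIntegral_sub_sq_mul c hw2 hxw2 hx2w2, hq, ← setIntegral_sub_const hxμ, ← hD,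
    iInf_rateFn_eq_ofReal _ (a := δ ^ 2 / (2 * D)) ?_]
  · congr 1; ring
  · refine (congrArg (IsLeast · _) (Set.ext fun r => exists_congr fun h =>
      and_congr_right fun hh => ?_)).mpr hleast
    rw [setIntegral_smInt_withDensityᵥ_indicator_Ioi hw hxw hh]
end
end

section
/- Assume (A1)–(A4). Write c_m = T^{-1}(q_m). Then, as m → ∞: (a) q_m²(E_ν[w(X)²1{X > c_m}] − q_m²)/f(c_m)² → 0, so that κ₁(q_m,δ) = (δ²/2)f(c_m)²/(q_m²(E_ν[w(X)²1{X > c_m}] − q_m²)) → ∞ for every δ > 0; (b) c_m²E_ν[w(X)²1{X > c_m}] − 2c_m E_ν[X w(X)²1{X > c_m}] + E_ν[X²w(X)²1{X > c_m}] − (E_μ[X1{X > c_m}] − q_m c_m)² → 0, so that κ₂(q_m,δ) → ∞ for every δ > 0; and (c) E_ν[w(X)²1{X > c_m}] − q_m² → 0, so that κ₃(q_m,δ) = δ²/(2(E_ν[w(X)²1{X > c_m}] − q_m²)) → ∞ for every δ > 0. -/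
open MeasureTheory Filter Set
open scoped Topology ENNReal

noncomputable section

/-- The tail `T(t) = μ((t,∞))` of a measure on `ℝ`. -/
def tailT (μ : Measure ℝ) (t : ℝ) : ℝ := (μ (Set.Ioi t)).toReal

/-- The importance sampling estimator of the tail,
`T_n^w(t) = ν_n^w((t,∞)) = n⁻¹ ∑_{i<n} w(X_i) 1{X_i > t}`. -/
def tailTnw {Ω : Type*} (w : ℝ → ℝ) (X : ℕ → Ω → ℝ) (n : ℕ) (ω : Ω) (t : ℝ) : ℝ :=
  (n : ℝ)⁻¹ * ∑ i ∈ Finset.range n, Set.indicator (Set.Ioi t) w (X i ω)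

/-- The right-continuous generalized inverse `H⁻¹(p) = inf{u : H(u) ≤ p}` of a
non-increasing function. -/
def rcInv (H : ℝ → ℝ) (p : ℝ) : ℝ := sInf {u : ℝ | H u ≤ p}

/-!
Since `μ = w • ν`, every tail moment of `ν` weighted by `w²` is a tail moment of `μ` weighted
by `w`: `E_ν[g(X) w(X)² 1{X > c}] = E_μ[g(X) w(X) 1{X > c}]`. The sets `{X > c_m}` have
`μ`-measure `q_m → 0`, and eventually `c_m ≥ c_0`, so each such integral is dominated by the
integral of a fixed function that is `μ`-integrable on `(c_0, ∞)`; absolute continuity of the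
Lebesgue integral sends it to `0`. The quantity in (c) is `Var_ν(w(X) 1{X > c_m})`, the one in (b)
is `Var_ν((X - c_m)⁺ w(X)) = E_ν[(X - c_m)² w(X)² 1{X > c_m}] - E_μ[(X - c_m) 1{X > c_m}]²`,
and the one in (a) is the difference of the two ratios that (A4) and (A2) make `o(1)`. Each
`κ` is then `δ²/2` divided by a positive quantity tending to `0`.
-/

theorem tendsto_setIntegral_zero_of_le {α ι : Type*} [MeasurableSpace α] {μ : Measure α}
    {l : Filter ι} {s : ι → Set α} {t : Set α} {F : ι → α → ℝ} {G : α → ℝ}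
    (hs : ∀ i, MeasurableSet (s i)) (hμs : Tendsto (fun i => μ (s i)) l (𝓝 0))
    (hG : IntegrableOn G t μ) (hF : ∀ i, AEStronglyMeasurable (F i) (μ.restrict (s i)))
    (hFG : ∀ᶠ i in l, s i ⊆ t ∧ ∀ x ∈ s i, 0 ≤ F i x ∧ F i x ≤ G x) :
    Tendsto (fun i => ∫ x in s i, F i x ∂μ) l (𝓝 0) := by
  have hGs : Tendsto (fun i => ∫ x in s i, G x ∂μ.restrict t) l (𝓝 0) :=
    hG.tendsto_setIntegral_nhds_zero <| tendsto_of_tendsto_of_tendsto_of_le_of_le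
      tendsto_const_nhds hμs (fun _ => zero_le) fun i => Measure.restrict_apply_le t (s i)
  refine squeeze_zero' ?_ ?_ hGs
  · filter_upwards [hFG] with i ⟨_, hbound⟩
    exact setIntegral_nonneg (hs i) fun x hx => (hbound x hx).1
  · filter_upwards [hFG] with i ⟨hst, hbound⟩
    have hFi : IntegrableOn (F i) (s i) μ := (hG.mono_set hst).mono' (hF i) <|
      (ae_restrict_iff' (hs i)).2 <| .of_forall fun x hx => by
        rw [Real.norm_eq_abs, abs_of_nonneg (hbound x hx).1]
        exact (hbound x hx).2
    rw [Measure.restrict_restrict_of_subset hst]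
    exact setIntegral_mono_on hFi (hG.mono_set hst) (hs i) fun x hx => (hbound x hx).2

theorem eventually_le_of_tendsto_measure_Ioi {ι : Type*} {l : Filter ι} {μ : Measure ℝ}
    {c : ι → ℝ} {a : ℝ} (hc : Tendsto (fun i => μ (Ioi (c i))) l (𝓝 0)) (ha : μ (Ioi a) ≠ 0) :
    ∀ᶠ i in l, a ≤ c i := by
  filter_upwards [hc.eventually (gt_mem_nhds (pos_iff_ne_zero.2 ha))] with i hi
  by_contra! hlt
  exact (measure_mono (Ioi_subset_Ioi hlt.le)).not_gt hi

theorem tendsto_const_div_atTop_of_tendsto_zero {ι : Type*} {l : Filter ι} {a : ι → ℝ} {C : ℝ}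
    (hC : 0 < C) (ha : Tendsto a l (𝓝 0)) (hpos : ∀ᶠ i in l, 0 < a i) :
    Tendsto (fun i => C / a i) l atTop := by
  simpa only [div_eq_mul_inv, Pi.inv_apply] using
    ((tendsto_nhdsWithin_iff.2 ⟨ha, hpos⟩).inv_tendsto_nhdsGT_zero).const_mul_atTop hC

section WithDensity

variable {α : Type*} [MeasurableSpace α] {ν : Measure α} {w : α → ℝ} {s : Set α}

theorem setIntegral_withDensity_ofReal (hw : Measurable w) (hw0 : ∀ x, 0 ≤ w x)
    (hs : MeasurableSet s) (g : α → ℝ) :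
    ∫ x in s, g x ∂ν.withDensity (fun x => ENNReal.ofReal (w x)) = ∫ x in s, w x * g x ∂ν := by
  change ∫ x in s, g x ∂ν.withDensity (fun x => ((w x).toNNReal : ℝ≥0∞)) = _
  rw [setIntegral_withDensity_eq_setIntegral_smul (f := fun x => (w x).toNNReal)
    (measurable_real_toNNReal.comp hw) g hs]
  simp only [NNReal.smul_def, Real.coe_toNNReal _ (hw0 _), smul_eq_mul]

theorem integrableOn_withDensity_ofReal_iff (hw : Measurable w) (hw0 : ∀ x, 0 ≤ w x)
    (hs : MeasurableSet s) {g : α → ℝ} :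
    IntegrableOn g s (ν.withDensity fun x => ENNReal.ofReal (w x)) ↔
      IntegrableOn (fun x => w x * g x) s ν := by
  change Integrable g ((ν.withDensity fun x => ((w x).toNNReal : ℝ≥0∞)).restrict s) ↔ _
  rw [restrict_withDensity hs, integrable_withDensity_iff_integrable_smul
    (f := fun x => (w x).toNNReal) (measurable_real_toNNReal.comp hw)]
  simp only [NNReal.smul_def, Real.coe_toNNReal _ (hw0 _), smul_eq_mul, IntegrableOn]

end WithDensity

section SecondMoment

variable {ν : Measure ℝ} {g : ℝ → ℝ} {s : Set ℝ}

theorem MeasureTheory.IntegrableOn.id_mul_of_sq_mul (hg : IntegrableOn g s ν)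
    (hg2 : IntegrableOn (fun x => x ^ 2 * g x) s ν) : IntegrableOn (fun x => x * g x) s ν := by
  refine (hg2.norm.add hg.norm).mono' (continuous_id.aestronglyMeasurable.mul
    hg.aestronglyMeasurable) (.of_forall fun x => ?_)
  have habs : |x| ≤ x ^ 2 + 1 := by nlinarith [sq_abs x, sq_nonneg (|x| - 1)]
  simp only [norm_mul, norm_pow, Real.norm_eq_abs, sq_abs, Pi.add_apply]
  nlinarith [mul_le_mul_of_nonneg_right habs (abs_nonneg (g x))]

theorem setIntegral_sub_sq_mul_s19 (hg : IntegrableOn g s ν)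
    (hg2 : IntegrableOn (fun x => x ^ 2 * g x) s ν) (a : ℝ) :
    IntegrableOn (fun x => (x - a) ^ 2 * g x) s ν ∧
      ∫ x in s, (x - a) ^ 2 * g x ∂ν =
        a ^ 2 * (∫ x in s, g x ∂ν) - 2 * a * (∫ x in s, x * g x ∂ν) + ∫ x in s, x ^ 2 * g x ∂ν := by
  have hg1 := hg.id_mul_of_sq_mul hg2
  have hexp : (fun x => (x - a) ^ 2 * g x) =
      fun x => a ^ 2 * g x - 2 * a * (x * g x) + x ^ 2 * g x := by
    ext x; ring
  rw [hexp]
  refine ⟨((hg.const_mul _).sub (hg1.const_mul _)).add hg2, ?_⟩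
  rw [integral_add, integral_sub, integral_const_mul, integral_const_mul]
  exacts [hg.const_mul _, hg1.const_mul _, (hg.const_mul _).sub (hg1.const_mul _), hg2]

end SecondMoment

section TailIntegrals

variable {ι : Type*} {l : Filter ι} {ν μ : Measure ℝ} {w : ℝ → ℝ} {c : ι → ℝ} {a : ℝ}

theorem tendsto_setIntegral_Ioi_sq_density
    (hμν : μ = ν.withDensity fun x => ENNReal.ofReal (w x)) (hw : Measurable w)
    (hw0 : ∀ x, 0 ≤ w x) (hμc : Tendsto (fun i => μ (Ioi (c i))) l (𝓝 0))
    (hc : ∀ᶠ i in l, a ≤ c i) (hw2 : IntegrableOn (fun x => w x ^ 2) (Ioi a) ν) :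
    Tendsto (fun i => ∫ x in Ioi (c i), w x ^ 2 ∂ν) l (𝓝 0) := by
  subst hμν
  have hwμ : IntegrableOn w (Ioi a) (ν.withDensity fun x => ENNReal.ofReal (w x)) :=
    (integrableOn_withDensity_ofReal_iff hw hw0 measurableSet_Ioi).2 (by simpa only [sq] using hw2)
  have h := tendsto_setIntegral_zero_of_le (fun _ => measurableSet_Ioi) hμc hwμ
    (fun _ => hw.aestronglyMeasurable)
    (hc.mono fun i hi => ⟨Ioi_subset_Ioi hi, fun x _ => ⟨hw0 x, le_rfl⟩⟩)
  simpa only [setIntegral_withDensity_ofReal hw hw0 measurableSet_Ioi, ← sq] using h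

theorem tendsto_setIntegral_Ioi_sub_sq_mul_sq
    (hμν : μ = ν.withDensity fun x => ENNReal.ofReal (w x)) (hw : Measurable w)
    (hw0 : ∀ x, 0 ≤ w x) (hμc : Tendsto (fun i => μ (Ioi (c i))) l (𝓝 0))
    (hc : ∀ᶠ i in l, a ≤ c i) (hw2 : IntegrableOn (fun x => w x ^ 2) (Ioi a) ν)
    (hxw2 : IntegrableOn (fun x => x ^ 2 * w x ^ 2) (Ioi a) ν) :
    Tendsto (fun i => ∫ x in Ioi (c i), (x - c i) ^ 2 * w x ^ 2 ∂ν) l (𝓝 0) := by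
  subst hμν
  have hG : IntegrableOn (fun x => (x - a) ^ 2 * w x) (Ioi a)
      (ν.withDensity fun x => ENNReal.ofReal (w x)) := by
    refine (integrableOn_withDensity_ofReal_iff hw hw0 measurableSet_Ioi).2 ?_
    refine (setIntegral_sub_sq_mul_s19 hw2 hxw2 a).1.congr_fun (fun x _ => ?_) measurableSet_Ioi
    ring
  have h := tendsto_setIntegral_zero_of_le (F := fun i x => (x - c i) ^ 2 * w x)
    (fun _ => measurableSet_Ioi) hμc hG (fun i => by fun_prop) <|
      hc.mono fun i hi => ⟨Ioi_subset_Ioi hi, fun x (hx : c i < x) =>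
        ⟨by have := hw0 x; positivity, by have := hw0 x; gcongr⟩⟩
  refine h.congr fun i => ?_
  rw [setIntegral_withDensity_ofReal hw hw0 measurableSet_Ioi]
  exact setIntegral_congr_fun measurableSet_Ioi fun x _ => by ring

theorem tendsto_setIntegral_Ioi_sub [IsFiniteMeasure μ]
    (hμc : Tendsto (fun i => μ (Ioi (c i))) l (𝓝 0)) (hc : ∀ᶠ i in l, a ≤ c i)
    (hx : IntegrableOn (fun x => x) (Ioi a) μ) :
    Tendsto (fun i => ∫ x in Ioi (c i), (x - c i) ∂μ) l (𝓝 0) :=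
  tendsto_setIntegral_zero_of_le (fun _ => measurableSet_Ioi) hμc (hx.sub integrableOn_const)
    (fun i => by fun_prop) <| hc.mono fun i hi => ⟨Ioi_subset_Ioi hi, fun x (hx : c i < x) =>
      ⟨by linarith, by simp only [Pi.sub_apply]; linarith⟩⟩

end TailIntegrals

section Kappa

variable {ι : Type*} {l : Filter ι}

theorem kappa₁_divergence {q I F : ι → ℝ} (hq : ∀ i, q i ≠ 0) (hpos : ∀ i, 0 < I i - q i ^ 2)
    (hA2 : (fun i => q i ^ 2) =o[l] F) (hA4 : (fun i => q i ^ 2 * I i) =o[l] fun i => F i ^ 2) :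
    Tendsto (fun i => q i ^ 2 * (I i - q i ^ 2) / F i ^ 2) l (𝓝 0) ∧
      ∀ δ > (0 : ℝ), Tendsto (fun i => δ ^ 2 / 2 * (F i ^ 2 / (q i ^ 2 * (I i - q i ^ 2)))) l
        atTop := by
  have hlim : Tendsto (fun i => q i ^ 2 * (I i - q i ^ 2) / F i ^ 2) l (𝓝 0) := by
    have h := hA4.tendsto_div_nhds_zero.sub (hA2.tendsto_div_nhds_zero.pow 2)
    rw [zero_pow two_ne_zero, sub_zero] at h
    exact h.congr fun i => by rw [div_pow]; ring
  have hF : ∀ᶠ i in l, F i ≠ 0 :=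
    hA2.isBigO.eq_zero_imp.mono fun i hi hF => pow_ne_zero 2 (hq i) (hi hF)
  refine ⟨hlim, fun δ hδ => ?_⟩
  refine (tendsto_const_div_atTop_of_tendsto_zero (C := δ ^ 2 / 2) (by positivity) hlim ?_).congr
    fun i => ?_
  · filter_upwards [hF] with i hFi
    have := hpos i
    have := hq i
    positivity
  · rw [div_div_eq_mul_div, mul_div_assoc]

theorem kappa₃_divergence {q I : ι → ℝ} (hI : Tendsto I l (𝓝 0)) (hq : Tendsto q l (𝓝 0))
    (hpos : ∀ i, 0 < I i - q i ^ 2) :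
    Tendsto (fun i => I i - q i ^ 2) l (𝓝 0) ∧
      ∀ δ > (0 : ℝ), Tendsto (fun i => δ ^ 2 / (2 * (I i - q i ^ 2))) l atTop := by
  have hlim : Tendsto (fun i => I i - q i ^ 2) l (𝓝 0) := by
    simpa using hI.sub (hq.pow 2)
  refine ⟨hlim, fun δ hδ => tendsto_const_div_atTop_of_tendsto_zero (by positivity) ?_ ?_⟩
  · simpa using hlim.const_mul 2
  · exact .of_forall fun i => mul_pos two_pos (hpos i)

theorem kappa₂_divergence {ν μ : Measure ℝ} [IsFiniteMeasure μ] {w : ℝ → ℝ} {q c : ι → ℝ}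
    {a : ℝ} (hμν : μ = ν.withDensity fun x => ENNReal.ofReal (w x)) (hw : Measurable w)
    (hw0 : ∀ x, 0 ≤ w x) (hq : ∀ i, μ.real (Ioi (c i)) = q i)
    (hμc : Tendsto (fun i => μ (Ioi (c i))) l (𝓝 0)) (hc : ∀ᶠ i in l, a ≤ c i)
    (hx : Integrable (fun x => x) μ) (hxw2 : Integrable (fun x => x ^ 2 * w x ^ 2) ν)
    (hw2a : IntegrableOn (fun x => w x ^ 2) (Ioi a) ν)
    (hw2 : ∀ i, IntegrableOn (fun x => w x ^ 2) (Ioi (c i)) ν)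
    (hpos : ∀ i, 0 < c i ^ 2 * (∫ x in Ioi (c i), w x ^ 2 ∂ν) -
      2 * c i * (∫ x in Ioi (c i), x * w x ^ 2 ∂ν) + (∫ x in Ioi (c i), x ^ 2 * w x ^ 2 ∂ν) -
      ((∫ x in Ioi (c i), x ∂μ) - q i * c i) ^ 2) :
    Tendsto (fun i => c i ^ 2 * (∫ x in Ioi (c i), w x ^ 2 ∂ν) -
      2 * c i * (∫ x in Ioi (c i), x * w x ^ 2 ∂ν) + (∫ x in Ioi (c i), x ^ 2 * w x ^ 2 ∂ν) -
      ((∫ x in Ioi (c i), x ∂μ) - q i * c i) ^ 2) l (𝓝 0) ∧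
    ∀ δ > (0 : ℝ), Tendsto (fun i => δ ^ 2 / 2 * (c i ^ 2 * (∫ x in Ioi (c i), w x ^ 2 ∂ν) -
      2 * c i * (∫ x in Ioi (c i), x * w x ^ 2 ∂ν) + (∫ x in Ioi (c i), x ^ 2 * w x ^ 2 ∂ν) -
      ((∫ x in Ioi (c i), x ∂μ) - q i * c i) ^ 2)⁻¹) l atTop := by
  have hM := tendsto_setIntegral_Ioi_sub_sq_mul_sq hμν hw hw0 hμc hc hw2a hxw2.integrableOn
  have hK := tendsto_setIntegral_Ioi_sub hμc hc hx.integrableOn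
  have hlim := hM.sub (hK.pow 2)
  rw [zero_pow two_ne_zero, sub_zero] at hlim
  replace hlim := hlim.congr fun i => by
    rw [(setIntegral_sub_sq_mul_s19 (hw2 i) hxw2.integrableOn (c i)).2,
      integral_sub hx.integrableOn integrableOn_const, setIntegral_const, smul_eq_mul, hq i]
  refine ⟨hlim, fun δ hδ => ?_⟩
  simpa only [div_eq_mul_inv] using
    tendsto_const_div_atTop_of_tendsto_zero (by positivity) hlim (.of_forall hpos)

end Kappa

theorem kappa_divergence_general
    (ν : Measure ℝ)
    (w : ℝ → ℝ) (hwmeas : Measurable w) (hwnonneg : ∀ x, 0 ≤ w x)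
    (μ : Measure ℝ) [IsProbabilityMeasure μ]
    (hμν : μ = ν.withDensity (fun x => ENNReal.ofReal (w x)))
    (qs : ℕ → ℝ)
    (hqs0 : Filter.Tendsto qs Filter.atTop (𝓝 0))
    (hqspos : ∀ m, 0 < qs m)
    (hqscont : ∀ m, tailT μ (rcInv (tailT μ) (qs m)) = qs m)
    (f : ℝ → ℝ)
    -- (A1): `μ` has a finite second moment
    (hA1 : Integrable (fun x : ℝ => x ^ 2) μ)
    -- (A2): `q_m² = o(f(T⁻¹(q_m)))`
    (hA2 : (fun m => (qs m) ^ 2) =o[Filter.atTop]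
      (fun m => f (rcInv (tailT μ) (qs m))))
    -- (A3): `E_ν[(X w(X))²] < ∞`
    (hA3 : Integrable (fun x : ℝ => x ^ 2 * (w x) ^ 2) ν)
    -- (A4): `q_m² E_ν[w(X)² 1{X > T⁻¹(q_m)}] = o(f(T⁻¹(q_m))²)`
    (hA4 : (fun m => (qs m) ^ 2 *
        ∫ x in Set.Ioi (rcInv (tailT μ) (qs m)), (w x) ^ 2 ∂ν) =o[Filter.atTop]
      (fun m => (f (rcInv (tailT μ) (qs m))) ^ 2))
    -- finiteness and (implicit) nondegeneracy of the variance terms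
    (hw2 : ∀ m, IntegrableOn (fun x => (w x) ^ 2) (Set.Ioi (rcInv (tailT μ) (qs m))) ν)
    (hpos1 : ∀ m,
      0 < (∫ x in Set.Ioi (rcInv (tailT μ) (qs m)), (w x) ^ 2 ∂ν) - (qs m) ^ 2)
    (hpos2 : ∀ m,
      0 < (rcInv (tailT μ) (qs m)) ^ 2 *
            (∫ x in Set.Ioi (rcInv (tailT μ) (qs m)), (w x) ^ 2 ∂ν) -
          2 * rcInv (tailT μ) (qs m) *
            (∫ x in Set.Ioi (rcInv (tailT μ) (qs m)), x * (w x) ^ 2 ∂ν) +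
          (∫ x in Set.Ioi (rcInv (tailT μ) (qs m)), x ^ 2 * (w x) ^ 2 ∂ν) -
          ((∫ x in Set.Ioi (rcInv (tailT μ) (qs m)), x ∂μ) -
            qs m * rcInv (tailT μ) (qs m)) ^ 2) :
    -- (a) `κ₁(q_m, δ) → ∞`
    (Filter.Tendsto (fun m =>
        (qs m) ^ 2 *
          ((∫ x in Set.Ioi (rcInv (tailT μ) (qs m)), (w x) ^ 2 ∂ν) - (qs m) ^ 2) /
          (f (rcInv (tailT μ) (qs m))) ^ 2)
      Filter.atTop (𝓝 0) ∧
      ∀ δ > (0:ℝ), Filter.Tendsto (fun m =>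
          δ ^ 2 / 2 * ((f (rcInv (tailT μ) (qs m))) ^ 2 /
            ((qs m) ^ 2 *
              ((∫ x in Set.Ioi (rcInv (tailT μ) (qs m)), (w x) ^ 2 ∂ν) -
                (qs m) ^ 2))))
        Filter.atTop Filter.atTop) ∧
    -- (b) `κ₂(q_m, δ) → ∞`
    (Filter.Tendsto (fun m =>
        (rcInv (tailT μ) (qs m)) ^ 2 *
            (∫ x in Set.Ioi (rcInv (tailT μ) (qs m)), (w x) ^ 2 ∂ν) -
          2 * rcInv (tailT μ) (qs m) *
            (∫ x in Set.Ioi (rcInv (tailT μ) (qs m)), x * (w x) ^ 2 ∂ν) +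
          (∫ x in Set.Ioi (rcInv (tailT μ) (qs m)), x ^ 2 * (w x) ^ 2 ∂ν) -
          ((∫ x in Set.Ioi (rcInv (tailT μ) (qs m)), x ∂μ) -
            qs m * rcInv (tailT μ) (qs m)) ^ 2)
      Filter.atTop (𝓝 0) ∧
      ∀ δ > (0:ℝ), Filter.Tendsto (fun m =>
          δ ^ 2 / 2 *
            ((rcInv (tailT μ) (qs m)) ^ 2 *
                (∫ x in Set.Ioi (rcInv (tailT μ) (qs m)), (w x) ^ 2 ∂ν) -
              2 * rcInv (tailT μ) (qs m) *
                (∫ x in Set.Ioi (rcInv (tailT μ) (qs m)), x * (w x) ^ 2 ∂ν) +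
              (∫ x in Set.Ioi (rcInv (tailT μ) (qs m)), x ^ 2 * (w x) ^ 2 ∂ν) -
              ((∫ x in Set.Ioi (rcInv (tailT μ) (qs m)), x ∂μ) -
                qs m * rcInv (tailT μ) (qs m)) ^ 2)⁻¹)
        Filter.atTop Filter.atTop) ∧
    -- (c) `κ₃(q_m, δ) → ∞`
    (Filter.Tendsto (fun m =>
        (∫ x in Set.Ioi (rcInv (tailT μ) (qs m)), (w x) ^ 2 ∂ν) - (qs m) ^ 2)
      Filter.atTop (𝓝 0) ∧
      ∀ δ > (0:ℝ), Filter.Tendsto (fun m =>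
          δ ^ 2 / (2 *
            ((∫ x in Set.Ioi (rcInv (tailT μ) (qs m)), (w x) ^ 2 ∂ν) - (qs m) ^ 2)))
        Filter.atTop Filter.atTop) := by
  have hμc : Tendsto (fun m => μ (Ioi (rcInv (tailT μ) (qs m)))) atTop (𝓝 0) := by
    have h := ENNReal.tendsto_ofReal hqs0
    rw [ENNReal.ofReal_zero] at h
    exact h.congr fun m =>
      (congrArg ENNReal.ofReal (hqscont m)).symm.trans (ENNReal.ofReal_toReal (measure_ne_top _ _))
  have hc : ∀ᶠ m in atTop, rcInv (tailT μ) (qs 0) ≤ rcInv (tailT μ) (qs m) :=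
    eventually_le_of_tendsto_measure_Ioi hμc fun h0 => (hqspos 0).ne' <| by
      rw [← hqscont 0, tailT, h0, ENNReal.toReal_zero]
  have hx : Integrable (fun x : ℝ => x) μ := by
    simpa only [mul_one, integrableOn_univ] using
      (integrableOn_const (s := univ) (C := (1 : ℝ))).id_mul_of_sq_mul
        (by simpa only [mul_one] using hA1.integrableOn)
  exact ⟨kappa₁_divergence (fun m => (hqspos m).ne') hpos1 hA2 hA4,
    kappa₂_divergence hμν hwmeas hwnonneg hqscont hμc hc hx hA3 (hw2 0) hw2 hpos2,
    kappa₃_divergence (tendsto_setIntegral_Ioi_sq_density hμν hwmeas hwnonneg hμc hc (hw2 0))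
      hqs0 hpos1⟩

/-- **Divergence of the optimal values `κ₁, κ₂, κ₃`** (end of proof of Lemma 4.7).
Under (A1)–(A4), writing `c_m = T⁻¹(q_m)`: (a) `q_m²(E_ν[w²1{X>c_m}] − q_m²)/f(c_m)² → 0`
so `κ₁(q_m,δ) → ∞`; (b) `c_m²E_ν[w²1] − 2c_mE_ν[Xw²1] + E_ν[X²w²1] − (E_μ[X1] − q_mc_m)²
→ 0` so `κ₂(q_m,δ) → ∞`; (c) `E_ν[w²1{X>c_m}] − q_m² → 0` so `κ₃(q_m,δ) → ∞`. -/
theorem kappa_divergence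
    (ν : Measure ℝ) [IsProbabilityMeasure ν]
    (w : ℝ → ℝ) (hwmeas : Measurable w) (hwnonneg : ∀ x, 0 ≤ w x)
    (μ : Measure ℝ) [IsProbabilityMeasure μ]
    (hμν : μ = ν.withDensity (fun x => ENNReal.ofReal (w x)))
    (qs : ℕ → ℝ) (hqsanti : Antitone qs)
    (hqs0 : Filter.Tendsto qs Filter.atTop (𝓝 0))
    (hqspos : ∀ m, 0 < qs m) (hqslt : ∀ m, qs m < 1)
    (hqscont : ∀ m, tailT μ (rcInv (tailT μ) (qs m)) = qs m)
    (f : ℝ → ℝ)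
    -- (A1): `μ` has a finite second moment
    (hA1 : Integrable (fun x : ℝ => x ^ 2) μ)
    -- (A2): `q_m² = o(f(T⁻¹(q_m)))`
    (hA2 : (fun m => (qs m) ^ 2) =o[Filter.atTop]
      (fun m => f (rcInv (tailT μ) (qs m))))
    -- (A3): `E_ν[(X w(X))²] < ∞`
    (hA3 : Integrable (fun x : ℝ => x ^ 2 * (w x) ^ 2) ν)
    -- (A4): `q_m² E_ν[w(X)² 1{X > T⁻¹(q_m)}] = o(f(T⁻¹(q_m))²)`
    (hA4 : (fun m => (qs m) ^ 2 *
        ∫ x in Set.Ioi (rcInv (tailT μ) (qs m)), (w x) ^ 2 ∂ν) =o[Filter.atTop]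
      (fun m => (f (rcInv (tailT μ) (qs m))) ^ 2))
    -- finiteness and (implicit) nondegeneracy of the variance terms
    (hw2 : ∀ m, IntegrableOn (fun x => (w x) ^ 2) (Set.Ioi (rcInv (tailT μ) (qs m))) ν)
    (hpos1 : ∀ m,
      0 < (∫ x in Set.Ioi (rcInv (tailT μ) (qs m)), (w x) ^ 2 ∂ν) - (qs m) ^ 2)
    (hpos2 : ∀ m,
      0 < (rcInv (tailT μ) (qs m)) ^ 2 *
            (∫ x in Set.Ioi (rcInv (tailT μ) (qs m)), (w x) ^ 2 ∂ν) -
          2 * rcInv (tailT μ) (qs m) *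
            (∫ x in Set.Ioi (rcInv (tailT μ) (qs m)), x * (w x) ^ 2 ∂ν) +
          (∫ x in Set.Ioi (rcInv (tailT μ) (qs m)), x ^ 2 * (w x) ^ 2 ∂ν) -
          ((∫ x in Set.Ioi (rcInv (tailT μ) (qs m)), x ∂μ) -
            qs m * rcInv (tailT μ) (qs m)) ^ 2) :
    -- (a) `κ₁(q_m, δ) → ∞`
    (Filter.Tendsto (fun m =>
        (qs m) ^ 2 *
          ((∫ x in Set.Ioi (rcInv (tailT μ) (qs m)), (w x) ^ 2 ∂ν) - (qs m) ^ 2) /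
          (f (rcInv (tailT μ) (qs m))) ^ 2)
      Filter.atTop (𝓝 0) ∧
      ∀ δ > (0:ℝ), Filter.Tendsto (fun m =>
          δ ^ 2 / 2 * ((f (rcInv (tailT μ) (qs m))) ^ 2 /
            ((qs m) ^ 2 *
              ((∫ x in Set.Ioi (rcInv (tailT μ) (qs m)), (w x) ^ 2 ∂ν) -
                (qs m) ^ 2))))
        Filter.atTop Filter.atTop) ∧
    -- (b) `κ₂(q_m, δ) → ∞`
    (Filter.Tendsto (fun m =>
        (rcInv (tailT μ) (qs m)) ^ 2 *
            (∫ x in Set.Ioi (rcInv (tailT μ) (qs m)), (w x) ^ 2 ∂ν) -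
          2 * rcInv (tailT μ) (qs m) *
            (∫ x in Set.Ioi (rcInv (tailT μ) (qs m)), x * (w x) ^ 2 ∂ν) +
          (∫ x in Set.Ioi (rcInv (tailT μ) (qs m)), x ^ 2 * (w x) ^ 2 ∂ν) -
          ((∫ x in Set.Ioi (rcInv (tailT μ) (qs m)), x ∂μ) -
            qs m * rcInv (tailT μ) (qs m)) ^ 2)
      Filter.atTop (𝓝 0) ∧
      ∀ δ > (0:ℝ), Filter.Tendsto (fun m =>
          δ ^ 2 / 2 *
            ((rcInv (tailT μ) (qs m)) ^ 2 *
                (∫ x in Set.Ioi (rcInv (tailT μ) (qs m)), (w x) ^ 2 ∂ν) -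
              2 * rcInv (tailT μ) (qs m) *
                (∫ x in Set.Ioi (rcInv (tailT μ) (qs m)), x * (w x) ^ 2 ∂ν) +
              (∫ x in Set.Ioi (rcInv (tailT μ) (qs m)), x ^ 2 * (w x) ^ 2 ∂ν) -
              ((∫ x in Set.Ioi (rcInv (tailT μ) (qs m)), x ∂μ) -
                qs m * rcInv (tailT μ) (qs m)) ^ 2)⁻¹)
        Filter.atTop Filter.atTop) ∧
    -- (c) `κ₃(q_m, δ) → ∞`
    (Filter.Tendsto (fun m =>
        (∫ x in Set.Ioi (rcInv (tailT μ) (qs m)), (w x) ^ 2 ∂ν) - (qs m) ^ 2)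
      Filter.atTop (𝓝 0) ∧
      ∀ δ > (0:ℝ), Filter.Tendsto (fun m =>
          δ ^ 2 / (2 *
            ((∫ x in Set.Ioi (rcInv (tailT μ) (qs m)), (w x) ^ 2 ∂ν) - (qs m) ^ 2)))
        Filter.atTop Filter.atTop) :=
  kappa_divergence_general ν w hwmeas hwnonneg μ hμν qs hqs0 hqspos hqscont f hA1 hA2 hA3 hA4 hw2
    hpos1 hpos2
end
end
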